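/- arXiv:1705.06164 — 2 statements merged into one kernel-verified Lean document; each statement's English description precedes it below -/
import Mathlib

section
/- Let X, Y be real Hilbert spaces, h ∈ Γ₀(Y), γ > 0, u ∈ X, and let B : X → Y be a bounded linear operator with 0 ∈ int(range B − dom h). If y* ∈ Y minimizes the dual objective y ↦ ½‖B*y − u/γ‖² + (1/γ) h*(y), then u − γB*y* is the unique minimizer of v ↦ ½‖v−u‖² + γh(Bv); that is, prox_{γ(h∘B)}(u) = u − γB*y*. -/
open scoped Pointwise RealInnerProductSpace
open Filter Topology

noncomputable section

/-- The Fenchel conjugate of an extended-real-valued function on a real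
inner product space: `f*(u) = sup_x (⟨x, u⟩ - f(x))`. -/
def fenchel {X : Type*} [NormedAddCommGroup X] [InnerProductSpace ℝ X]
    (f : X → EReal) (u : X) : EReal :=
  ⨆ x : X, ((⟪x, u⟫ : ℝ) : EReal) - f x

/-- `IsProx φ μ v p` means `p` is a minimizer over `x` of
`½‖x - v‖² + μ·φ(x)`, i.e. `p = prox_{μφ}(v)`. -/
def IsProx {X : Type*} [NormedAddCommGroup X] [InnerProductSpace ℝ X]
    (φ : X → EReal) (μ : ℝ) (v p : X) : Prop :=
  ∀ x : X, (((1 : ℝ)/2 * ‖p - v‖^2 : ℝ) : EReal) + (μ : EReal) * φ p ≤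
    (((1 : ℝ)/2 * ‖x - v‖^2 : ℝ) : EReal) + (μ : EReal) * φ x

/-- `f ∈ Γ₀(X)`: proper, lower semicontinuous, convex, with values in `(-∞, +∞]`. -/
structure IsGamma0 {X : Type*} [NormedAddCommGroup X] [InnerProductSpace ℝ X]
    (f : X → EReal) : Prop where
  convex : ∀ x y : X, ∀ a b : ℝ, 0 ≤ a → 0 ≤ b → a + b = 1 →
    f (a • x + b • y) ≤ (a : EReal) * f x + (b : EReal) * f y
  lsc : LowerSemicontinuous f
  ne_bot : ∀ x, f x ≠ ⊥
  ne_top : ∃ x, f x ≠ ⊤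

/-- The Moreau envelope `φ̃_μ(x) = inf_y (φ(y) + (1/(2μ))‖x - y‖²)`. -/
def moreauEnv {X : Type*} [NormedAddCommGroup X] [InnerProductSpace ℝ X]
    (φ : X → EReal) (μ : ℝ) (x : X) : EReal :=
  ⨅ y : X, φ y + ((1/(2*μ) * ‖x - y‖^2 : ℝ) : EReal)

section Auxiliary

variable {Y : Type*} [NormedAddCommGroup Y] [InnerProductSpace ℝ Y]

lemma ereal_exists_real {e : EReal} (h1 : e ≠ ⊥) (h2 : e ≠ ⊤) : ∃ r : ℝ, e = (r : EReal) :=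
  ⟨e.toReal, (EReal.coe_toReal h2 h1).symm⟩

lemma ereal_exists_real_le {e : EReal} (h1 : e ≠ ⊥) {m : ℝ} (h2 : e ≤ (m : EReal)) :
    ∃ r : ℝ, e = (r : EReal) ∧ r ≤ m := by
  obtain ⟨r, hr⟩ := ereal_exists_real h1 (h2.trans_lt (EReal.coe_lt_top m)).ne
  exact ⟨r, hr, by rwa [hr, EReal.coe_le_coe_iff] at h2⟩

lemma gamma0_finite {h : Y → EReal} (hh : IsGamma0 h) :
    ∃ (x0 : Y) (r0 : ℝ), h x0 = (r0 : EReal) := by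
  obtain ⟨x0, hx0⟩ := hh.ne_top
  exact ⟨x0, (ereal_exists_real (hh.ne_bot x0) hx0).choose,
    (ereal_exists_real (hh.ne_bot x0) hx0).choose_spec⟩

lemma le_fenchel (h : Y → EReal) (x y : Y) :
    ((⟪x, y⟫ : ℝ) : EReal) - h x ≤ fenchel h y :=
  le_iSup (fun x => ((⟪x, y⟫ : ℝ) : EReal) - h x) x

lemma fenchel_ineq {h : Y → EReal} {z y : Y} {t s : ℝ}
    (hz : h z = (t : EReal)) (hy : fenchel h y ≤ (s : EReal)) :
    ⟪z, y⟫ - t ≤ s := by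
  have := (le_fenchel h z y).trans hy
  rw [hz, ← EReal.coe_sub, EReal.coe_le_coe_iff] at this
  exact this

lemma fenchel_ne_bot {h : Y → EReal} (hh : IsGamma0 h) (y : Y) : fenchel h y ≠ ⊥ := by
  obtain ⟨x0, r0, hx0⟩ := gamma0_finite hh
  have := le_fenchel h x0 y
  rw [hx0, ← EReal.coe_sub] at this
  intro hb
  rw [hb, le_bot_iff] at this
  exact EReal.coe_ne_bot _ this

lemma fenchel_convex_real {h : Y → EReal} (hh : IsGamma0 h) {y1 y2 : Y} {r1 r2 : ℝ}
    (h1 : fenchel h y1 ≤ (r1 : EReal)) (h2 : fenchel h y2 ≤ (r2 : EReal))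
    {a b : ℝ} (ha : 0 ≤ a) (hb : 0 ≤ b) (hab : a + b = 1) :
    fenchel h (a • y1 + b • y2) ≤ ((a * r1 + b * r2 : ℝ) : EReal) := by
  refine iSup_le fun x => ?_
  rcases eq_or_ne (h x) ⊤ with hx | hx
  · rw [hx, EReal.sub_top]; exact bot_le
  · obtain ⟨ρ, hρ⟩ := ereal_exists_real (hh.ne_bot x) hx
    rw [hρ, ← EReal.coe_sub, EReal.coe_le_coe_iff]
    have e1 : ⟪x, y1⟫ - ρ ≤ r1 := fenchel_ineq hρ h1
    have e2 : ⟪x, y2⟫ - ρ ≤ r2 := fenchel_ineq hρ h2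
    have hin : ⟪x, a • y1 + b • y2⟫ = a * ⟪x, y1⟫ + b * ⟪x, y2⟫ := by
      rw [inner_add_right, real_inner_smul_right, real_inner_smul_right]
    rw [hin]
    have hρ1 : a * ρ + b * ρ = ρ := by linear_combination ρ * hab
    nlinarith [mul_le_mul_of_nonneg_left e1 ha, mul_le_mul_of_nonneg_left e2 hb]

lemma sep_lemma [CompleteSpace Y] {h : Y → EReal} (hh : IsGamma0 h)
    (xb : Y) (m : ℝ) (hm : ¬ h xb ≤ (m : EReal)) :
    ∃ (a : Y) (s c : ℝ), 0 ≤ s ∧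
      (∀ (z : Y) (t : ℝ), h z ≤ (t : EReal) → c ≤ ⟪a, z⟫ + s * t) ∧
      ⟪a, xb⟫ + s * m < c := by
  obtain ⟨x0, r0, hx0⟩ := gamma0_finite hh
  set epi : Set (Y × ℝ) := {p | h p.1 ≤ ((p.2 : ℝ) : EReal)} with hepi
  have hclosed : IsClosed epi := by
    have h1 : IsClosed {p : Y × EReal | h p.1 ≤ p.2} := hh.lsc.isClosed_epigraph
    have hcont : Continuous (fun p : Y × ℝ => ((p.1, (p.2 : EReal)) : Y × EReal)) :=
      continuous_fst.prodMk (continuous_coe_real_ereal.comp continuous_snd)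
    exact h1.preimage hcont
  have hconvex : Convex ℝ epi := by
    rintro ⟨z1, t1⟩ h1 ⟨z2, t2⟩ h2 a b ha hb hab
    simp only [hepi, Set.mem_setOf_eq] at h1 h2 ⊢
    obtain ⟨ρ1, hρ1, hρ1le⟩ := ereal_exists_real_le (hh.ne_bot z1) h1
    obtain ⟨ρ2, hρ2, hρ2le⟩ := ereal_exists_real_le (hh.ne_bot z2) h2
    have := hh.convex z1 z2 a b ha hb hab
    rw [hρ1, hρ2, ← EReal.coe_mul, ← EReal.coe_mul, ← EReal.coe_add] at this
    refine this.trans ?_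
    rw [EReal.coe_le_coe_iff]
    simp only [Prod.smul_mk, Prod.mk_add_mk, smul_eq_mul]
    nlinarith [mul_le_mul_of_nonneg_left hρ1le ha, mul_le_mul_of_nonneg_left hρ2le hb]
  have hnotmem : ((xb, m) : Y × ℝ) ∉ epi := hm
  obtain ⟨f, c, hfx, hfepi⟩ := geometric_hahn_banach_point_closed hconvex hclosed hnotmem
  set a : Y := (InnerProductSpace.toDual ℝ Y).symm (f.comp (ContinuousLinearMap.inl ℝ Y ℝ)) with ha
  set s : ℝ := f (0, 1) with hs
  have hdecomp : ∀ (z : Y) (t : ℝ), f (z, t) = ⟪a, z⟫ + s * t := by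
    intro z t
    have h1 : ⟪a, z⟫ = f (z, 0) := by
      rw [ha]
      rw [InnerProductSpace.toDual_symm_apply]
      rfl
    have h2 : ((z, t) : Y × ℝ) = (z, 0) + t • ((0 : Y), (1 : ℝ)) := by
      simp [Prod.ext_iff]
    rw [h2, map_add, f.map_smul, h1, hs, smul_eq_mul]
    ring
  have key : ∀ (z : Y) (t : ℝ), h z ≤ (t : EReal) → c ≤ ⟪a, z⟫ + s * t := by
    intro z t hz
    have := hfepi (z, t) hz
    rw [hdecomp] at this
    exact this.le
  have hlt : ⟪a, xb⟫ + s * m < c := by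
    have := hfx; rwa [hdecomp] at this
  have hs0 : 0 ≤ s := by
    by_contra hneg
    push_neg at hneg
    set t : ℝ := max r0 ((c - ⟪a, x0⟫ - 1) / s) with ht
    have hmem : h x0 ≤ (t : EReal) := by
      rw [hx0]; exact_mod_cast le_max_left _ _
    have h1 := key x0 t hmem
    have h2 : s * t ≤ c - ⟪a, x0⟫ - 1 := by
      have : (c - ⟪a, x0⟫ - 1) / s ≤ t := le_max_right _ _
      calc s * t ≤ s * ((c - ⟪a, x0⟫ - 1) / s) :=
            mul_le_mul_of_nonpos_left this hneg.le
        _ = c - ⟪a, x0⟫ - 1 := by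
            rw [mul_comm, div_mul_cancel₀ _ hneg.ne]
    linarith
  exact ⟨a, s, c, hs0, key, hlt⟩

lemma fenchel_bound_of_sep {h : Y → EReal} (hh : IsGamma0 h) {a : Y} {s c : ℝ} (hspos : 0 < s)
    (hkey : ∀ (z : Y) (t : ℝ), h z ≤ (t : EReal) → c ≤ ⟪a, z⟫ + s * t) :
    fenchel h ((-s⁻¹) • a) ≤ ((-c / s : ℝ) : EReal) := by
  refine iSup_le fun x => ?_
  rcases eq_or_ne (h x) ⊤ with hx | hx
  · rw [hx, EReal.sub_top]; exact bot_le
  · obtain ⟨ρ, hρ⟩ := ereal_exists_real (hh.ne_bot x) hx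
    rw [hρ, ← EReal.coe_sub, EReal.coe_le_coe_iff]
    have h1 := hkey x ρ (le_of_eq hρ)
    have hinner : ⟪x, (-s⁻¹) • a⟫ = -s⁻¹ * ⟪a, x⟫ := by
      rw [real_inner_smul_right, real_inner_comm]
    rw [hinner]
    have h2 := mul_le_mul_of_nonneg_left h1 (inv_nonneg.mpr hspos.le)
    have h3 : s⁻¹ * (⟪a, x⟫ + s * ρ) = s⁻¹ * ⟪a, x⟫ + ρ := by field_simp
    have h4 : -c / s = -(s⁻¹ * c) := by field_simp
    rw [h4]
    linarith

/-- The Fenchel conjugate is proper. -/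
lemma fenchel_proper [CompleteSpace Y] {h : Y → EReal} (hh : IsGamma0 h) :
    ∃ (y1 : Y) (s1 : ℝ), fenchel h y1 = (s1 : EReal) := by
  obtain ⟨x0, r0, hx0⟩ := gamma0_finite hh
  have hm : ¬ h x0 ≤ ((r0 - 1 : ℝ) : EReal) := by
    rw [hx0, EReal.coe_le_coe_iff]; linarith
  obtain ⟨a, s, c, hs0, hkey, hlt⟩ := sep_lemma hh x0 (r0 - 1) hm
  have h1 := hkey x0 r0 (le_of_eq hx0)
  have hspos : 0 < s := by nlinarith
  obtain ⟨s1, hs1, _⟩ := ereal_exists_real_le (fenchel_ne_bot hh _)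
    (fenchel_bound_of_sep hh hspos hkey)
  exact ⟨_, s1, hs1⟩

end Auxiliary

set_option maxHeartbeats 1600000 in
/-- if `y*` minimizes the dual objective
`y ↦ ½‖B*y - u/γ‖² + (1/γ)h*(y)`, then `u - γB*y*` is the unique minimizer of
`v ↦ ½‖v - u‖² + γh(Bv)`, i.e. `prox_{γ(h∘B)}(u) = u - γB*y*`. -/
theorem prox_comp_via_dual {X Y : Type*}
    [NormedAddCommGroup X] [InnerProductSpace ℝ X] [CompleteSpace X]
    [NormedAddCommGroup Y] [InnerProductSpace ℝ Y] [CompleteSpace Y]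
    (h : Y → EReal) (hh : IsGamma0 h)
    (γ : ℝ) (hγ : 0 < γ) (u : X) (B : X →L[ℝ] Y)
    (hint : (0 : Y) ∈ interior (Set.range B - {y | h y ≠ ⊤}))
    (Φ : Y → EReal)
    (hΦ : Φ = fun y =>
      (((1 : ℝ)/2 * ‖(ContinuousLinearMap.adjoint B) y - γ⁻¹ • u‖^2 : ℝ) : EReal)
        + ((γ⁻¹ : ℝ) : EReal) * fenchel h y)
    (ystar : Y) (hystar : ∀ y : Y, Φ ystar ≤ Φ y) :
    IsProx (fun v => h (B v)) γ u (u - γ • (ContinuousLinearMap.adjoint B) ystar) ∧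
    ∀ v' : X, IsProx (fun v => h (B v)) γ u v' →
      v' = u - γ • (ContinuousLinearMap.adjoint B) ystar := by
  set Bs := ContinuousLinearMap.adjoint B with hBs
  set p := u - γ • Bs ystar with hp
  clear_value Bs p
  have hγinv : (0 : ℝ) < γ⁻¹ := inv_pos.mpr hγ
  obtain ⟨y1, s1, hy1⟩ := fenchel_proper hh
  -- fenchel h ystar is a real number r
  have hstar_ne_top : fenchel h ystar ≠ ⊤ := by
    intro htop
    have hmin := hystar y1
    rw [hΦ] at hmin
    simp only [] at hmin
    rw [htop, hy1, EReal.coe_mul_top_of_pos hγinv, EReal.coe_add_top,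
      ← EReal.coe_mul, ← EReal.coe_add, top_le_iff] at hmin
    exact EReal.coe_ne_top _ hmin
  obtain ⟨r, hr⟩ := ereal_exists_real (fenchel_ne_bot hh ystar) hstar_ne_top
  -- real form of the dual minimality
  have hΦreal : ∀ (y : Y) (ρ : ℝ), fenchel h y = (ρ : EReal) →
      1/2 * ‖Bs ystar - γ⁻¹ • u‖^2 + γ⁻¹ * r ≤ 1/2 * ‖Bs y - γ⁻¹ • u‖^2 + γ⁻¹ * ρ := by
    intro y ρ hρ
    have hmin := hystar y
    rw [hΦ] at hmin
    simp only [] at hmin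
    rw [hρ, hr, ← EReal.coe_mul, ← EReal.coe_mul, ← EReal.coe_add, ← EReal.coe_add,
      EReal.coe_le_coe_iff] at hmin
    exact hmin
  -- Step 1 : the subgradient inequality  r + ⟪Bp, y - ystar⟫ ≤ fenchel h y
  have key : ∀ (y : Y) (sy : ℝ), fenchel h y = (sy : EReal) →
      r + ⟪B p, y - ystar⟫ ≤ sy := by
    intro y sy hsy
    set d := y - ystar with hd
    set q0 := Bs ystar - γ⁻¹ • u with hq0
    set C2 : ℝ := ‖Bs d‖^2 with hC2
    clear_value d q0 C2
    have hC2nn : 0 ≤ C2 := by rw [hC2]; positivity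
    have hstep : ∀ t : ℝ, 0 < t → t ≤ 1 →
        0 ≤ t * (⟪q0, Bs d⟫ + γ⁻¹ * (sy - r)) + t^2/2 * C2 := by
      intro t ht0 ht1
      set yt := (1 - t) • ystar + t • y with hyt
      have hconv : fenchel h yt ≤ (((1-t) * r + t * sy : ℝ) : EReal) :=
        fenchel_convex_real hh (le_of_eq hr) (le_of_eq hsy) (by linarith) ht0.le (by ring)
      obtain ⟨ρt, hρt, hρtle⟩ := ereal_exists_real_le (fenchel_ne_bot hh yt) hconv
      have hcomp := hΦreal yt ρt hρt
      have hyt2 : Bs yt - γ⁻¹ • u = q0 + t • Bs d := by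
        simp only [hyt, hq0, hd, map_add, map_smul, map_sub]
        module
      have hnorm : ‖Bs yt - γ⁻¹ • u‖^2 = ‖q0‖^2 + 2*(t*⟪q0, Bs d⟫) + t^2*C2 := by
        rw [hyt2, norm_add_sq_real, real_inner_smul_right, norm_smul,
          Real.norm_eq_abs, mul_pow, sq_abs, hC2]
      rw [hnorm] at hcomp
      nlinarith [mul_le_mul_of_nonneg_left
        (show ρt - r ≤ t * (sy - r) by linarith) (le_of_lt hγinv)]
    have hC1 : 0 ≤ ⟪q0, Bs d⟫ + γ⁻¹ * (sy - r) := by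
      by_contra hneg
      push_neg at hneg
      set C1 : ℝ := ⟪q0, Bs d⟫ + γ⁻¹ * (sy - r) with hC1def
      set t : ℝ := min 1 (-C1 / (C2 + 1)) with htdef
      clear_value C1 t
      have ht0 : 0 < t := by
        rw [htdef]
        exact lt_min one_pos (div_pos (neg_pos.mpr hneg)
          (show (0:ℝ) < C2 + 1 by linarith))
      have hts := hstep t ht0 (by rw [htdef]; exact min_le_left _ _)
      have ht2 : t ≤ -C1 / (C2 + 1) := by rw [htdef]; exact min_le_right _ _
      have h6 : t * (C2 + 1) ≤ -C1 := by
        rw [← le_div_iff₀ (by linarith : (0:ℝ) < C2 + 1)]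
        exact ht2
      nlinarith [mul_pos ht0 ht0, mul_le_mul_of_nonneg_left h6 ht0.le]
    -- translate to ⟪Bp, d⟫
    have hpd : ⟪B p, d⟫ = -(γ * ⟪q0, Bs d⟫) := by
      rw [← ContinuousLinearMap.adjoint_inner_right B p d, ← hBs, hp, hq0,
        inner_sub_left, inner_sub_left, real_inner_smul_left, real_inner_smul_left]
      field_simp
      ring
    have hmul := mul_le_mul_of_nonneg_left hC1 hγ.le
    have h8 : γ * (γ⁻¹ * (sy - r)) = sy - r := by field_simp
    nlinarith [hmul, h8, hpd]
  -- Step 2 : h (B p) ≤ ⟪B p, ystar⟫ - r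
  have hm : h (B p) ≤ ((⟪B p, ystar⟫ - r : ℝ) : EReal) := by
    by_contra hm
    obtain ⟨a, s, c, hs0, hkey, hlt⟩ := sep_lemma hh (B p) (⟪B p, ystar⟫ - r) hm
    rcases hs0.eq_or_lt with hs | hs
    · -- s = 0
      have hub : fenchel h (ystar - a) ≤ ((r - c : ℝ) : EReal) := by
        refine iSup_le fun x => ?_
        rcases eq_or_ne (h x) ⊤ with hx | hx
        · rw [hx, EReal.sub_top]; exact bot_le
        · obtain ⟨ρ, hρ⟩ := ereal_exists_real (hh.ne_bot x) hx
          rw [hρ, ← EReal.coe_sub, EReal.coe_le_coe_iff]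
          have h1 := hkey x ρ (le_of_eq hρ)
          rw [← hs] at h1
          have h2 : ⟪x, ystar⟫ - ρ ≤ r := fenchel_ineq hρ (le_of_eq hr)
          have h3 : ⟪x, ystar - a⟫ = ⟪x, ystar⟫ - ⟪a, x⟫ := by
            rw [inner_sub_right, real_inner_comm x a]
          rw [h3]
          linarith
      obtain ⟨s2, hs2, hs2le⟩ := ereal_exists_real_le (fenchel_ne_bot hh _) hub
      have hk := key (ystar - a) s2 hs2
      have h4 : ⟪B p, ystar - a - ystar⟫ = -⟪a, B p⟫ := by
        have : ystar - a - ystar = -a := by abel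
        rw [this, inner_neg_right, real_inner_comm]
      rw [h4] at hk
      rw [← hs] at hlt
      linarith
    · -- s > 0
      obtain ⟨s2, hs2, hs2le⟩ := ereal_exists_real_le (fenchel_ne_bot hh _)
        (fenchel_bound_of_sep hh hs hkey)
      have hk := key ((-s⁻¹) • a) s2 hs2
      have h4 : ⟪B p, (-s⁻¹) • a - ystar⟫ = -s⁻¹ * ⟪a, B p⟫ - ⟪B p, ystar⟫ := by
        rw [inner_sub_right, real_inner_smul_right, real_inner_comm (B p) a]
      rw [h4] at hk
      have h5 : r + (-s⁻¹ * ⟪a, B p⟫ - ⟪B p, ystar⟫) ≤ -c / s := le_trans hk hs2le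
      have h6 := mul_le_mul_of_nonneg_left h5 hs.le
      have h7 : s * (-c / s) = -c := by field_simp
      have h8 : s * (r + (-s⁻¹ * ⟪a, B p⟫ - ⟪B p, ystar⟫))
          = s * r - ⟪a, B p⟫ - s * ⟪B p, ystar⟫ := by
        field_simp
        ring
      rw [h7, h8] at h6
      nlinarith
  obtain ⟨ρp, hρp, hρple⟩ := ereal_exists_real_le (hh.ne_bot (B p)) hm
  -- Fenchel inequality
  have hfen : ∀ (z : Y) (ρ : ℝ), h z = (ρ : EReal) → ⟪z, ystar⟫ - ρ ≤ r :=
    fun z ρ hz => fenchel_ineq hz (le_of_eq hr)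
  -- the real quadratic core inequality
  have core : ∀ (v : X) (tv : ℝ), ⟪B v, ystar⟫ - r ≤ tv →
      1/2 * ‖p - u‖^2 + γ * ρp ≤ 1/2 * ‖v - u‖^2 + γ * tv := by
    intro v tv htv
    set w := γ • Bs ystar with hww
    clear_value w
    have hw : ∀ v' : X, γ * ⟪B v', ystar⟫ = ⟪v', w⟫ := by
      intro v'
      rw [hww, real_inner_smul_right, hBs, ContinuousLinearMap.adjoint_inner_right]
    have h1 : γ * ρp ≤ γ * (⟪B p, ystar⟫ - r) := mul_le_mul_of_nonneg_left hρple hγ.le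
    have h2 : γ * (⟪B v, ystar⟫ - r) ≤ γ * tv := mul_le_mul_of_nonneg_left htv hγ.le
    have h3 := hw p
    have h4 := hw v
    have h5 : ‖p - u‖^2 = ‖w‖^2 := by
      rw [hp, hww]
      rw [show u - γ • Bs ystar - u = -(γ • Bs ystar) by abel, norm_neg]
    have h6 : ‖(v - u) + w‖^2 = ‖v - u‖^2 + 2*⟪v - u, w⟫ + ‖w‖^2 := norm_add_sq_real _ _
    have h7 : ⟪v - u, w⟫ = ⟪v, w⟫ - ⟪u, w⟫ := inner_sub_left _ _ _
    have h8 : ⟪p, w⟫ = ⟪u, w⟫ - ⟪w, w⟫ := by rw [hp, hww, inner_sub_left]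
    have h9 : ⟪w, w⟫ = ‖w‖^2 := real_inner_self_eq_norm_sq w
    nlinarith [sq_nonneg ‖(v - u) + w‖]
  -- First part: IsProx
  have hprox : IsProx (fun v => h (B v)) γ u p := by
    intro x
    simp only []
    rw [hρp, ← EReal.coe_mul, ← EReal.coe_add]
    rcases eq_or_ne (h (B x)) ⊤ with hx | hx
    · rw [hx, EReal.coe_mul_top_of_pos hγ, EReal.coe_add_top]
      exact le_top
    · obtain ⟨t, ht⟩ := ereal_exists_real (hh.ne_bot _) hx
      rw [ht, ← EReal.coe_mul, ← EReal.coe_add, EReal.coe_le_coe_iff]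
      exact core x t (by linarith [hfen (B x) t ht])
  refine ⟨hprox, ?_⟩
  -- Uniqueness
  intro v' hv'
  have h1 := hv' p
  have h2 := hprox v'
  simp only [] at h1 h2
  rw [hρp, ← EReal.coe_mul, ← EReal.coe_add] at h1 h2
  have hx : h (B v') ≠ ⊤ := by
    intro htop
    rw [htop, EReal.coe_mul_top_of_pos hγ, EReal.coe_add_top, top_le_iff] at h1
    exact EReal.coe_ne_top _ h1
  obtain ⟨t', ht'⟩ := ereal_exists_real (hh.ne_bot _) hx
  rw [ht', ← EReal.coe_mul, ← EReal.coe_add, EReal.coe_le_coe_iff] at h1 h2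
  -- midpoint argument
  set z := (1/2 : ℝ) • v' + (1/2 : ℝ) • p with hz
  clear_value z
  have hBz : B z = (1/2 : ℝ) • (B v') + (1/2 : ℝ) • (B p) := by
    rw [hz, map_add, map_smul, map_smul]
  have hconv := hh.convex (B v') (B p) (1/2) (1/2) (by norm_num) (by norm_num) (by norm_num)
  rw [← hBz, ht', hρp, ← EReal.coe_mul, ← EReal.coe_mul, ← EReal.coe_add] at hconv
  obtain ⟨ρz, hρz, hρzle⟩ := ereal_exists_real_le (hh.ne_bot _) hconv
  have h3 := hv' z
  simp only [] at h3
  rw [ht', hρz, ← EReal.coe_mul, ← EReal.coe_mul, ← EReal.coe_add, ← EReal.coe_add,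
    EReal.coe_le_coe_iff] at h3
  have hzu : z - u = (1/2 : ℝ) • ((v' - u) + (p - u)) := by
    rw [hz]; module
  have hnz : ‖z - u‖^2 = 1/4 * ‖(v' - u) + (p - u)‖^2 := by
    rw [hzu, norm_smul, Real.norm_eq_abs, mul_pow, sq_abs]
    norm_num
  have hpar : ‖(v' - u) + (p - u)‖^2 + ‖(v' - u) - (p - u)‖^2
      = 2*‖v' - u‖^2 + 2*‖p - u‖^2 := by
    have ha := norm_add_sq_real (v' - u) (p - u)
    have hb := norm_sub_sq_real (v' - u) (p - u)
    linarith
  have hd : (v' - u) - (p - u) = v' - p := by abel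
  rw [hd] at hpar
  have hργ : γ * ρz ≤ γ * (1/2 * t' + 1/2 * ρp) := mul_le_mul_of_nonneg_left hρzle hγ.le
  have hfin : ‖v' - p‖^2 ≤ 0 := by nlinarith
  have : ‖v' - p‖ = 0 := by nlinarith [sq_nonneg ‖v' - p‖, norm_nonneg (v' - p)]
  have := norm_eq_zero.mp this
  exact sub_eq_zero.mp this
end
end

section
/- Let X, Y be real Hilbert spaces, let f : X → ℝ be differentiable, g ∈ Γ₀(X), h ∈ Γ₀(Y), B : X → Y a bounded linear operator, and let γ, σ, τ > 0. Given x⁰ ∈ X and y⁰ ∈ Y, define sequences by x^{k+1} = prox_{(τγ/(1+τ))g}((x^k − τB*y^k + τ(x^k − γ∇f(x^k)))/(1+τ)) and y^{k+1} = γ · prox_{(σ/γ)h*}((1/γ)y^k + (σ/γ)B(2x^{k+1} − x^k)). Then, setting ȳ^k = y^k/γ, τ' = τγ/(1+τ) and σ' = σ/γ, the sequences satisfy the Condat–Vu recursion: x^{k+1} = prox_{τ'g}(x^k − τ'B*ȳ^k − τ'∇f(x^k)) and ȳ^{k+1} = prox_{σ'h*}(ȳ^k + σ'B(2x^{k+1}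 − x^k)) for every k. -/
open scoped Pointwise RealInnerProductSpace
open Filter Topology

noncomputable section

/-- the primal-dual forward-backward algorithm with one inner
iteration, rewritten with `ȳ^k = y^k/γ`, `τ' = τγ/(1+τ)`, `σ' = σ/γ`, satisfies
the Condat–Vu recursion. -/
theorem one_inner_iteration_is_condat_vu {X Y : Type*}
    [NormedAddCommGroup X] [InnerProductSpace ℝ X] [CompleteSpace X]
    [NormedAddCommGroup Y] [InnerProductSpace ℝ Y] [CompleteSpace Y]
    (f : X → ℝ) (f' : X → X) (hf' : ∀ x : X, HasGradientAt f (f' x) x)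
    (g : X → EReal) (hg : IsGamma0 g) (h : Y → EReal) (hh : IsGamma0 h)
    (B : X →L[ℝ] Y)
    (γ σ τ : ℝ) (hγ : 0 < γ) (hσ : 0 < σ) (hτ : 0 < τ)
    (x : ℕ → X) (y : ℕ → Y)
    -- `x^{k+1} = prox_{(τγ/(1+τ))g}((x^k - τB*y^k + τ(x^k - γ∇f(x^k)))/(1+τ))`
    (hx : ∀ k : ℕ, IsProx g (τ * γ / (1 + τ))
      ((1 + τ)⁻¹ • (x k - τ • (ContinuousLinearMap.adjoint B) (y k)
        + τ • (x k - γ • f' (x k)))) (x (k + 1)))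
    -- `y^{k+1} = γ · prox_{(σ/γ)h*}((1/γ)y^k + (σ/γ)B(2x^{k+1} - x^k))`
    (hy : ∀ k : ℕ, IsProx (fenchel h) (σ/γ)
      (γ⁻¹ • y k + (σ/γ) • B ((2 : ℝ) • x (k + 1) - x k)) (γ⁻¹ • y (k + 1))) :
    ∀ k : ℕ,
      IsProx g (τ * γ / (1 + τ))
        (x k - (τ * γ / (1 + τ)) • (ContinuousLinearMap.adjoint B) (γ⁻¹ • y k)
          - (τ * γ / (1 + τ)) • f' (x k)) (x (k + 1)) ∧
      IsProx (fenchel h) (σ/γ)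
        ((γ⁻¹ • y k) + (σ/γ) • B ((2 : ℝ) • x (k + 1) - x k)) (γ⁻¹ • y (k + 1)) := by
  intro k
  refine ⟨?_, hy k⟩
  have hne : (1:ℝ) + τ ≠ 0 := by positivity
  have hγne : γ ≠ 0 := ne_of_gt hγ
  have hveq : x k - (τ * γ / (1 + τ)) • (ContinuousLinearMap.adjoint B) (γ⁻¹ • y k)
      - (τ * γ / (1 + τ)) • f' (x k)
      = (1 + τ)⁻¹ • (x k - τ • (ContinuousLinearMap.adjoint B) (y k)
          + τ • (x k - γ • f' (x k))) := by
    rw [map_smul]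
    match_scalars <;> field_simp <;> ring
  rw [hveq]
  exact hx k
end
end
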